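/- Let q_{ij} = ε(F_{n-v}^{j→i}) be the entries of the matrix of maximum out forests of a weighted digraph G. Then q_{ij} ≠ 0 if and only if j belongs to some undominated knot of G and i is reachable from j in G. -/

import Mathlib

/-!
Every vertex is reachable from an undominated knot, and every knot contains a root of each spanning
diverging forest, since no arc enters it. Conversely, if every vertex is reachable from a set `R`,
giving each vertex outside `R` a parent one step closer to `R` yields a forest with root set `R`,
hence with `n - |R|` arcs. So the roots of a maximum forest lie in knots and none of them reaches
another (it could be dropped otherwise). Exchanging the root of the knot of `j` for `j`, and letting
the descendants of `j` take their parents among the descendants of `j`, gives a maximum forest in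
which the tree of `j` contains every vertex reachable from `j`.
-/

open scoped Classical
open Finset

variable {n : ℕ}

/-- The arc relation of a finite arc set. -/
def arcRel (F : Finset (Fin n × Fin n)) : Fin n → Fin n → Prop :=
  fun a b => (a, b) ∈ F

/-- A diverging forest: no directed cycles, and every vertex has in-degree at most 1. -/
def IsDivForest (F : Finset (Fin n × Fin n)) : Prop :=
  (∀ v, ¬ Relation.TransGen (arcRel F) v v) ∧
  ∀ w z₁ z₂, (z₁, w) ∈ F → (z₂, w) ∈ F → z₁ = z₂

/-- `F` is a spanning diverging forest of the weighted digraph whose arcs are the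
pairs of positive weight under `ε`. -/
def IsSpForest (ε : Fin n → Fin n → ℝ) (F : Finset (Fin n × Fin n)) : Prop :=
  (∀ p ∈ F, 0 < ε p.1 p.2) ∧ IsDivForest F

/-- The weight of a forest: the product of its arc weights. -/
noncomputable def fweight (ε : Fin n → Fin n → ℝ) (F : Finset (Fin n × Fin n)) : ℝ :=
  ∏ p ∈ F, ε p.1 p.2

/-- The weight of a set of forests: the sum of the weights of its members. -/
noncomputable def swt (ε : Fin n → Fin n → ℝ)
    (S : Finset (Finset (Fin n × Fin n))) : ℝ :=
  ∑ F ∈ S, fweight ε F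

/-- The set of spanning diverging forests with `k` arcs. -/
noncomputable def forestsK (ε : Fin n → Fin n → ℝ) (k : ℕ) :
    Finset (Finset (Fin n × Fin n)) :=
  Finset.univ.filter (fun F => IsSpForest ε F ∧ F.card = k)

/-- The set of spanning diverging forests with `k` arcs in which vertex `i` belongs to
the tree diverging from `j` (so `j` is a root and `i` is reachable from `j`). -/
noncomputable def forestsKji (ε : Fin n → Fin n → ℝ) (k : ℕ) (j i : Fin n) :
    Finset (Finset (Fin n × Fin n)) :=
  (forestsK ε k).filter (fun F => (∀ u, (u, j) ∉ F) ∧ Relation.ReflTransGen (arcRel F) j i)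

/-- The maximum number of arcs in a spanning diverging forest, equal to `n - v`
where `v` is the forest dimension. -/
noncomputable def maxArcs (ε : Fin n → Fin n → ℝ) : ℕ :=
  (Finset.univ.filter (fun F : Finset (Fin n × Fin n) => IsSpForest ε F)).sup Finset.card

/-- The Kirchhoff matrix of the weighted digraph with weights `ε`. -/
noncomputable def Kirchhoff (ε : Fin n → Fin n → ℝ) : Matrix (Fin n) (Fin n) ℝ :=
  Matrix.of fun i j =>
    if i = j then ∑ k ∈ Finset.univ.filter (· ≠ i), ε k i else - ε j i

/-- The matrix of maximum out forests: entry `(i, j)` is the total weight of maximum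
out forests in which `i` lies in the tree diverging from `j`. -/
noncomputable def Qmax (ε : Fin n → Fin n → ℝ) : Matrix (Fin n) (Fin n) ℝ :=
  Matrix.of fun i j => swt ε (forestsKji ε (maxArcs ε) j i)

/-- The normalized matrix of maximum out forests. -/
noncomputable def Jbar (ε : Fin n → Fin n → ℝ) : Matrix (Fin n) (Fin n) ℝ :=
  (swt ε (forestsK ε (maxArcs ε)))⁻¹ • Qmax ε

/-- `K` is an undominated knot of the weighted digraph with weights `ε`. -/
def IsUndomKnot (ε : Fin n → Fin n → ℝ) (K : Finset (Fin n)) : Prop :=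
  K.Nonempty ∧
  (∀ i ∈ K, ∀ j ∈ K, Relation.ReflTransGen (fun a b => 0 < ε a b) i j) ∧
  ∀ i j : Fin n, 0 < ε i j → j ∈ K → i ∈ K

open Relation

section Reachability

variable {α : Type*} {s : α → α → Prop}

theorem exists_ancestor_reachable_from_parents [Fintype α] (x : α) :
    ∃ g, ReflTransGen s g x ∧ ∀ u, s u g → ReflTransGen s g u := by
  -- an ancestor of `x` with as few ancestors as possible
  let A : α → Finset α := fun y => univ.filter (ReflTransGen s · y)
  have mem_A {u y : α} : u ∈ A y ↔ ReflTransGen s u y := by simp [A]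
  obtain ⟨g, hgx, hmin⟩ := (A x).exists_min_image (fun g => (A g).card) ⟨x, mem_A.2 .refl⟩
  refine ⟨g, mem_A.1 hgx, fun u hug => ?_⟩
  have hsub : A u ⊆ A g := fun v hv => mem_A.2 ((mem_A.1 hv).tail hug)
  have hA : A u = A g :=
    eq_of_subset_of_card_le hsub (hmin u (mem_A.2 ((mem_A.1 hgx).head hug)))
  exact mem_A.1 (hA ▸ mem_A.2 .refl)

def reachLayer (s : α → α → Prop) (R : Set α) : ℕ → Set α
  | 0 => R
  | k + 1 => reachLayer s R k ∪ {y | ∃ x ∈ reachLayer s R k, s x y}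

theorem exists_mem_reachLayer {R : Set α} {r x : α} (hr : r ∈ R) (h : ReflTransGen s r x) :
    ∃ k, x ∈ reachLayer s R k := by
  induction h with
  | refl => exact ⟨0, hr⟩
  | tail _ hyz ih =>
    obtain ⟨k, hk⟩ := ih
    exact ⟨k + 1, Or.inr ⟨_, hk, hyz⟩⟩

theorem exists_parent_of_forall_reflTransGen {R : Set α}
    (hR : ∀ x, ∃ r ∈ R, ReflTransGen s r x) :
    ∃ (p : α → α) (φ : α → ℕ), ∀ x ∉ R, s (p x) x ∧ φ (p x) < φ x := by
  have hlayer (x : α) : ∃ k, x ∈ reachLayer s R k := by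
    obtain ⟨r, hr, hrx⟩ := hR x
    exact exists_mem_reachLayer hr hrx
  -- the parent of `x` is a vertex one layer closer to `R`
  have hparent (x : α) :
      ∃ y, x ∉ R → s y x ∧ Nat.find (hlayer y) < Nat.find (hlayer x) := by
    by_cases hx : x ∈ R
    · exact ⟨x, absurd hx⟩
    have hspec := Nat.find_spec (hlayer x)
    obtain ⟨m, hm⟩ : ∃ m, Nat.find (hlayer x) = m + 1 :=
      Nat.exists_eq_add_one_of_ne_zero fun h => hx (by rwa [h] at hspec)
    have hxm : x ∉ reachLayer s R m := Nat.find_min (hlayer x) (by omega)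
    rw [hm] at hspec
    obtain ⟨y, hy, hyx⟩ := hspec.resolve_left hxm
    exact ⟨y, fun _ => ⟨hyx, (Nat.find_min' _ hy).trans_lt (by omega)⟩⟩
  choose p hp using hparent
  exact ⟨p, fun x => Nat.find (hlayer x), hp⟩

end Reachability

def Reach (ε : Fin n → Fin n → ℝ) : Fin n → Fin n → Prop :=
  ReflTransGen fun a b => 0 < ε a b

def IsBasic (ε : Fin n → Fin n → ℝ) (j : Fin n) : Prop :=
  ∀ u, Reach ε u j → Reach ε j u

section Basic

variable {ε : Fin n → Fin n → ℝ}

theorem IsBasic.of_reach {g r : Fin n} (hg : IsBasic ε g) (hrg : Reach ε r g) : IsBasic ε r :=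
  fun u hur => hrg.trans (hg u (hur.trans hrg))

theorem exists_isBasic_reach (x : Fin n) : ∃ g, IsBasic ε g ∧ Reach ε g x := by
  obtain ⟨g, hgx, hg⟩ := exists_ancestor_reachable_from_parents (s := Reach ε) x
  have hflat {a b : Fin n} (h : ReflTransGen (Reach ε) a b) : Reach ε a b :=
    reflTransGen_closed (fun _ _ hab => hab) _ _ h
  exact ⟨g, fun u hu => hflat (hg u hu), hflat hgx⟩

theorem isBasic_iff_exists_isUndomKnot {j : Fin n} :
    IsBasic ε j ↔ ∃ K, IsUndomKnot ε K ∧ j ∈ K := by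
  constructor
  · intro hj
    let K := univ.filter fun u => Reach ε j u ∧ Reach ε u j
    have mem_K {u : Fin n} : u ∈ K ↔ Reach ε j u ∧ Reach ε u j := by simp [K]
    refine ⟨K, ⟨⟨j, mem_K.2 ⟨.refl, .refl⟩⟩, fun x hx y hy => ?_, fun a b hab hb => ?_⟩,
      mem_K.2 ⟨.refl, .refl⟩⟩
    · exact (mem_K.1 hx).2.trans (mem_K.1 hy).1
    · have haj : Reach ε a j := (mem_K.1 hb).2.head hab
      exact mem_K.2 ⟨hj a haj, haj⟩
  · rintro ⟨K, ⟨-, hconn, hclosed⟩, hjK⟩ u huj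
    have huK : u ∈ K := by
      induction huj using ReflTransGen.head_induction_on with
      | refl => exact hjK
      | head hab _ hbK => exact hclosed _ _ hab hbK
    exact hconn j hjK u huK

end Basic

def roots (F : Finset (Fin n × Fin n)) : Finset (Fin n) :=
  univ.filter fun x => ∀ z, (z, x) ∉ F

section Forests

variable {ε : Fin n → Fin n → ℝ} {F : Finset (Fin n × Fin n)}

theorem mem_roots {x : Fin n} : x ∈ roots F ↔ ∀ z, (z, x) ∉ F := by
  simp [roots]

theorem IsDivForest.card_add_card_roots (hF : IsDivForest F) : F.card + (roots F).card = n := by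
  have himage : F.image Prod.snd = (roots F)ᶜ := by
    ext x
    simp [roots]
  have hinj : Set.InjOn Prod.snd (F : Set (Fin n × Fin n)) := by
    rintro ⟨a, b⟩ hab ⟨c, d⟩ hcd (rfl : b = d)
    rw [hF.2 b a c hab hcd]
  rw [← card_image_of_injOn hinj, himage, card_compl_add_card, Fintype.card_fin]

theorem IsDivForest.exists_mem_roots_reflTransGen (hF : IsDivForest F) (x : Fin n) :
    ∃ r ∈ roots F, ReflTransGen (arcRel F) r x := by
  obtain ⟨g, hgx, hg⟩ := exists_ancestor_reachable_from_parents (s := arcRel F) x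
  exact ⟨g, mem_roots.2 fun z hz => hF.1 g (TransGen.tail' (hg z hz) hz), hgx⟩

theorem IsSpForest.reach_of_reflTransGen (hF : IsSpForest ε F) {a b : Fin n}
    (h : ReflTransGen (arcRel F) a b) : Reach ε a b :=
  ReflTransGen.mono (fun a b hab => hF.1 (a, b) hab) _ _ h

theorem IsSpForest.exists_mem_roots_reach (hF : IsSpForest ε F) (x : Fin n) :
    ∃ r ∈ roots F, Reach ε r x := by
  obtain ⟨r, hr, hrx⟩ := hF.2.exists_mem_roots_reflTransGen x
  exact ⟨r, hr, hF.reach_of_reflTransGen hrx⟩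

end Forests

def parentForest (R : Finset (Fin n)) (p : Fin n → Fin n) : Finset (Fin n × Fin n) :=
  Rᶜ.image fun x => (p x, x)

section ParentForest

variable {ε : Fin n → Fin n → ℝ} {R : Finset (Fin n)} {p : Fin n → Fin n}

theorem mem_parentForest {a b : Fin n} : (a, b) ∈ parentForest R p ↔ b ∉ R ∧ p b = a := by
  simp [parentForest, and_comm]

theorem card_parentForest_add_card : (parentForest R p).card + R.card = n := by
  rw [parentForest, card_image_of_injective _ fun x y h => (Prod.ext_iff.1 h).2,
    card_compl_add_card, Fintype.card_fin]

theorem isSpForest_parentForest (φ : Fin n → ℕ)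
    (hp : ∀ x ∉ R, 0 < ε (p x) x ∧ φ (p x) < φ x) : IsSpForest ε (parentForest R p) := by
  have hlt {a b : Fin n} (h : TransGen (arcRel (parentForest R p)) a b) : φ a < φ b := by
    induction h with
    | single hab =>
      obtain ⟨hb, rfl⟩ := mem_parentForest.1 hab
      exact (hp _ hb).2
    | tail _ hbc ih =>
      obtain ⟨hc, rfl⟩ := mem_parentForest.1 hbc
      exact ih.trans (hp _ hc).2
  refine ⟨fun ⟨a, b⟩ hab => ?_, fun v hv => (hlt hv).false, fun w z₁ z₂ h₁ h₂ => ?_⟩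
  · obtain ⟨hb, rfl⟩ := mem_parentForest.1 hab
    exact (hp b hb).1
  · exact (mem_parentForest.1 h₁).2.symm.trans (mem_parentForest.1 h₂).2

theorem exists_isSpForest_card_add_card (hR : ∀ x, ∃ r ∈ R, Reach ε r x) :
    ∃ F, IsSpForest ε F ∧ F.card + R.card = n := by
  obtain ⟨p, φ, hp⟩ := exists_parent_of_forall_reflTransGen (R := (R : Set (Fin n))) hR
  exact ⟨parentForest R p, isSpForest_parentForest φ hp, card_parentForest_add_card⟩

theorem exists_isSpForest_tree (hR : ∀ x, ∃ r ∈ R, Reach ε r x) {j : Fin n} (hjR : j ∈ R)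
    (hj : ∀ r ∈ R, Reach ε j r → r = j) :
    ∃ F, IsSpForest ε F ∧ F.card + R.card = n ∧ j ∈ roots F ∧
      ∀ i, Reach ε j i → ReflTransGen (arcRel F) j i := by
  -- Discarding the arcs that enter the descendants of `j` from outside forces every
  -- descendant of `j` into the tree of `j`.
  let s : Fin n → Fin n → Prop := fun a b => 0 < ε a b ∧ (Reach ε j b → Reach ε j a)
  have hRs : ∀ x, ∃ r ∈ R, ReflTransGen s r x := by
    intro x
    by_cases hjx : Reach ε j x
    · refine ⟨j, hjR, ?_⟩
      induction hjx with
      | refl => rfl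
      | tail hjb hbc ih => exact ih.tail ⟨hbc, fun _ => hjb⟩
    · obtain ⟨r, hr, hrx⟩ := hR x
      refine ⟨r, hr, ?_⟩
      induction hrx with
      | refl => rfl
      | tail _ hbc ih =>
        exact (ih fun hjb => hjx (hjb.tail hbc)).tail ⟨hbc, fun h => absurd h hjx⟩
  obtain ⟨p, φ, hp⟩ := exists_parent_of_forall_reflTransGen (R := (R : Set (Fin n))) hRs
  refine ⟨parentForest R p, isSpForest_parentForest φ fun x hx => ⟨(hp x hx).1.1, (hp x hx).2⟩,
    card_parentForest_add_card, mem_roots.2 fun z hz => (mem_parentForest.1 hz).1 hjR, ?_⟩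
  intro i hi
  induction hk : φ i using Nat.strong_induction_on generalizing i with
  | _ k ih =>
    by_cases hiR : i ∈ R
    · obtain rfl := hj i hiR hi
      rfl
    · obtain ⟨⟨-, hpi⟩, hlt⟩ := hp i hiR
      exact (ih _ (hk ▸ hlt) (p i) (hpi hi) rfl).tail (mem_parentForest.2 ⟨hiR, rfl⟩)

end ParentForest

section MaxForests

variable {ε : Fin n → Fin n → ℝ} {F : Finset (Fin n × Fin n)}

theorem IsSpForest.card_le_maxArcs (hF : IsSpForest ε F) : F.card ≤ maxArcs ε :=
  le_sup (f := Finset.card) (mem_filter.2 ⟨mem_univ F, hF⟩)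

theorem exists_isSpForest_card_eq_maxArcs (ε : Fin n → Fin n → ℝ) :
    ∃ F, IsSpForest ε F ∧ F.card = maxArcs ε := by
  obtain ⟨F₀, hF₀, -⟩ :=
    exists_isSpForest_card_add_card (ε := ε) (R := univ) fun x => ⟨x, mem_univ x, .refl⟩
  obtain ⟨F, hF, hcard⟩ := exists_mem_eq_sup _ ⟨F₀, mem_filter.2 ⟨mem_univ F₀, hF₀⟩⟩ Finset.card
  exact ⟨F, (mem_filter.1 hF).2, hcard.symm⟩

theorem card_roots_le_of_reach (hF : IsSpForest ε F) (hmax : F.card = maxArcs ε)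
    {R : Finset (Fin n)} (hR : ∀ x, ∃ r ∈ R, Reach ε r x) : (roots F).card ≤ R.card := by
  obtain ⟨F', hF', hcard⟩ := exists_isSpForest_card_add_card hR
  have := hF.2.card_add_card_roots
  have := hF'.card_le_maxArcs
  omega

theorem isBasic_of_mem_roots (hF : IsSpForest ε F) (hmax : F.card = maxArcs ε) {r : Fin n}
    (hr : r ∈ roots F) : IsBasic ε r := by
  have hB : ∀ x, ∃ b ∈ (roots F).filter (IsBasic ε), Reach ε b x := by
    intro x
    obtain ⟨g, hg, hgx⟩ := exists_isBasic_reach (ε := ε) x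
    obtain ⟨b, hb, hbg⟩ := hF.exists_mem_roots_reach g
    exact ⟨b, mem_filter.2 ⟨hb, hg.of_reach hbg⟩, hbg.trans hgx⟩
  have hroots := eq_of_subset_of_card_le (filter_subset _ _) (card_roots_le_of_reach hF hmax hB)
  rw [← hroots] at hr
  exact (mem_filter.1 hr).2

theorem not_reach_of_mem_roots (hF : IsSpForest ε F) (hmax : F.card = maxArcs ε) {r r' : Fin n}
    (hr : r ∈ roots F) (hr' : r' ∈ roots F) (hne : r ≠ r') : ¬ Reach ε r r' := by
  intro hrr'
  have hR : ∀ x, ∃ b ∈ (roots F).erase r', Reach ε b x := by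
    intro x
    obtain ⟨b, hb, hbx⟩ := hF.exists_mem_roots_reach x
    by_cases hbr' : b = r'
    · subst hbr'
      exact ⟨r, mem_erase.2 ⟨hne, hr⟩, hrr'.trans hbx⟩
    · exact ⟨b, mem_erase.2 ⟨hbr', hb⟩, hbx⟩
  have := card_roots_le_of_reach hF hmax hR
  rw [card_erase_of_mem hr'] at this
  have := card_pos.2 ⟨r', hr'⟩
  omega

theorem exists_maxArcs_tree {j : Fin n} (hj : IsBasic ε j) :
    ∃ F, IsSpForest ε F ∧ F.card = maxArcs ε ∧ j ∈ roots F ∧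
      ∀ i, Reach ε j i → ReflTransGen (arcRel F) j i := by
  obtain ⟨F₀, hF₀, hmax⟩ := exists_isSpForest_card_eq_maxArcs ε
  obtain ⟨r, hr, hrj⟩ := hF₀.exists_mem_roots_reach j
  -- exchange the root `r` of the knot of `j` for `j`
  let R := insert j ((roots F₀).erase r)
  have hR : ∀ x, ∃ b ∈ R, Reach ε b x := by
    intro x
    obtain ⟨b, hb, hbx⟩ := hF₀.exists_mem_roots_reach x
    by_cases hbr : b = r
    · subst hbr
      exact ⟨j, mem_insert_self _ _, (hj _ hrj).trans hbx⟩
    · exact ⟨b, mem_insert_of_mem (mem_erase.2 ⟨hbr, hb⟩), hbx⟩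
  have hjR : ∀ b ∈ R, Reach ε j b → b = j := by
    intro b hb hjb
    rcases mem_insert.1 hb with rfl | hb
    · rfl
    · obtain ⟨hbr, hb⟩ := mem_erase.1 hb
      exact absurd (hrj.trans hjb) (not_reach_of_mem_roots hF₀ hmax hr hb (Ne.symm hbr))
  obtain ⟨F, hF, hcard, hjF, htree⟩ := exists_isSpForest_tree hR (mem_insert_self _ _) hjR
  have : R.card ≤ (roots F₀).card := (card_insert_le _ _).trans (card_erase_add_one hr).le
  have := hF₀.2.card_add_card_roots
  have := hF.card_le_maxArcs
  exact ⟨F, hF, by omega, hjF, htree⟩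

end MaxForests

theorem mem_forestsKji {ε : Fin n → Fin n → ℝ} {k : ℕ} {j i : Fin n} {F : Finset (Fin n × Fin n)} :
    F ∈ forestsKji ε k j i ↔
      (IsSpForest ε F ∧ F.card = k) ∧ j ∈ roots F ∧ ReflTransGen (arcRel F) j i := by
  simp [forestsKji, forestsK, mem_roots]

theorem swt_ne_zero_iff {ε : Fin n → Fin n → ℝ} {S : Finset (Finset (Fin n × Fin n))}
    (hS : ∀ F ∈ S, IsSpForest ε F) : swt ε S ≠ 0 ↔ S.Nonempty := by
  refine ⟨fun h => nonempty_iff_ne_empty.2 ?_, fun hne => (sum_pos ?_ hne).ne'⟩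
  · rintro rfl
    exact h (sum_empty)
  · exact fun F hF => prod_pos fun a ha => (hS F hF).1 a ha

theorem stmt14_general (ε : Fin n → Fin n → ℝ) (i j : Fin n) :
    Qmax ε i j ≠ 0 ↔
      (∃ K : Finset (Fin n), IsUndomKnot ε K ∧ j ∈ K) ∧
        Relation.ReflTransGen (fun a b => 0 < ε a b) j i := by
  rw [Qmax, Matrix.of_apply, swt_ne_zero_iff fun F hF => (mem_forestsKji.1 hF).1.1,
    ← isBasic_iff_exists_isUndomKnot]
  constructor
  · rintro ⟨F, hF⟩
    obtain ⟨⟨hsp, hmax⟩, hjF, hji⟩ := mem_forestsKji.1 hF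
    exact ⟨isBasic_of_mem_roots hsp hmax hjF, hsp.reach_of_reflTransGen hji⟩
  · rintro ⟨hj, hji⟩
    obtain ⟨F, hF, hmax, hjF, htree⟩ := exists_maxArcs_tree hj
    exact ⟨F, mem_forestsKji.2 ⟨⟨hF, hmax⟩, hjF, htree i hji⟩⟩

/-- `q_{ij} ≠ 0` iff `j` lies in some undominated knot and `i` is reachable from `j`. -/
theorem stmt14 (ε : Fin n → Fin n → ℝ) (hnonneg : ∀ i j, 0 ≤ ε i j)
    (hloop : ∀ i, ε i i = 0) (i j : Fin n) :
    Qmax ε i j ≠ 0 ↔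
      (∃ K : Finset (Fin n), IsUndomKnot ε K ∧ j ∈ K) ∧
        Relation.ReflTransGen (fun a b => 0 < ε a b) j i :=
  stmt14_general ε i j
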